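/- Let X, Y, Z, A, B, C, Λ be finite sets and let P be a joint probability distribution on X×Y×Z×A×B×C×Λ such that P(x,y,z,λ) > 0 for all x,y,z,λ. Suppose the free-choice conditions hold (whenever the conditioning event has positive probability): P(x|y,z,b,c,λ) = P(x), P(y|x,a,λ) = P(y), P(y|z,c,λ) = P(y), and P(z|x,y,a,b,λ) = P(z). Then the conditional distributions obey the relativistic causality constraints: P(a,b|x,y,z,λ) = P(a,b|x,y,λ) for all a,b,x,y,z,λ; P(b,c|x,y,z,λ) = P(b,c|y,z,λ) for all b,c,x,y,z,λ; P(a|x,y,z,λ) = P(a|x,λ) for all a,x,y,z,λ; and P(c|x,y,z,λ) = P(c|z,λ) for all c,x,y,z,λ. -/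
import Mathlib


open Finset

private lemma sum_nn {ι : Type*} [Fintype ι] {f : ι → ℝ} (h : ∀ i, 0 ≤ f i) :
    0 ≤ ∑ i, f i := Finset.sum_nonneg fun i _ => h i

private lemma sum_pos_elt {ι : Type*} [Fintype ι] {f : ι → ℝ} (h : ∀ i, 0 ≤ f i)
    (i : ι) (hi : 0 < f i) : 0 < ∑ j, f j :=
  Finset.sum_pos' (fun j _ => h j) ⟨i, Finset.mem_univ i, hi⟩

private lemma sc3 {α β γ : Type*} [Fintype α] [Fintype β] [Fintype γ]
    (f : α → β → γ → ℝ) :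
    ∑ a, ∑ b, ∑ c, f a b c = ∑ c, ∑ a, ∑ b, f a b c := by
  rw [show (∑ a, ∑ b, ∑ c, f a b c) = ∑ a, ∑ c, ∑ b, f a b c from
    Finset.sum_congr rfl fun a _ => Finset.sum_comm]
  exact Finset.sum_comm

private lemma sc4 {α β γ δ : Type*} [Fintype α] [Fintype β] [Fintype γ] [Fintype δ]
    (f : α → β → γ → δ → ℝ) :
    ∑ a, ∑ b, ∑ c, ∑ d, f a b c d = ∑ d, ∑ a, ∑ b, ∑ c, f a b c d := by
  rw [show (∑ a, ∑ b, ∑ c, ∑ d, f a b c d) = ∑ a, ∑ d, ∑ b, ∑ c, f a b c d from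
    Finset.sum_congr rfl fun a _ => sc3 _]
  exact Finset.sum_comm

private lemma factor_aux {ι : Type*} [Fintype ι] (f : ι → ℝ) (q : ℝ) (i : ι)
    (hnn : ∀ j, 0 ≤ f j)
    (h : 0 < ∑ j, f j → f i / (∑ j, f j) = q) :
    f i = q * ∑ j, f j := by
  rcases (sum_nn hnn).lt_or_eq with hp | hz
  · have h2 := h hp
    rw [div_eq_iff hp.ne'] at h2
    rw [h2, mul_comm]
  · have hfi : f i = 0 :=
      le_antisymm (hz ▸ Finset.single_le_sum (fun j _ => hnn j) (Finset.mem_univ i)) (hnn i)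
    rw [hfi, ← hz, mul_zero]

/-- **Free choice implies relativistic causality** (tripartite configuration in which
the intersection of Alice's and Charlie's future light cones lies inside Bob's
future light cone). `J x y z a b c l` is the joint probability of inputs `(x,y,z)`,
outputs `(a,b,c)` and hidden variable `l`; conditional probabilities are ratios of
marginals. If the free-choice conditions hold, then the conditional distributions
obey the relativistic causality constraints. -/
theorem relativistic_causality_of_free_choice
    {X Y Z A B C Λ : Type*}
    [Fintype X] [Fintype Y] [Fintype Z] [Fintype A] [Fintype B] [Fintype C] [Fintype Λ]
    (J : X → Y → Z → A → B → C → Λ → ℝ)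
    (hnonneg : ∀ x y z a b c l, 0 ≤ J x y z a b c l)
    (hsum : ∑ x, ∑ y, ∑ z, ∑ a, ∑ b, ∑ c, ∑ l, J x y z a b c l = 1)
    -- P(x,y,z,λ) > 0 for all x,y,z,λ
    (hpos : ∀ x y z l, 0 < ∑ a, ∑ b, ∑ c, J x y z a b c l)
    -- free choice: P(x|y,z,b,c,λ) = P(x)
    (hFC_X : ∀ x y z b c l,
      0 < (∑ x', ∑ a, J x' y z a b c l) →
      (∑ a, J x y z a b c l) / (∑ x', ∑ a, J x' y z a b c l)
        = ∑ y', ∑ z', ∑ a, ∑ b', ∑ c', ∑ l', J x y' z' a b' c' l')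
    -- free choice: P(y|x,a,λ) = P(y)
    (hFC_Y1 : ∀ y x a l,
      0 < (∑ y', ∑ z, ∑ b, ∑ c, J x y' z a b c l) →
      (∑ z, ∑ b, ∑ c, J x y z a b c l) / (∑ y', ∑ z, ∑ b, ∑ c, J x y' z a b c l)
        = ∑ x', ∑ z, ∑ a', ∑ b, ∑ c, ∑ l', J x' y z a' b c l')
    -- free choice: P(y|z,c,λ) = P(y)
    (hFC_Y2 : ∀ y z c l,
      0 < (∑ x, ∑ y', ∑ a, ∑ b, J x y' z a b c l) →
      (∑ x, ∑ a, ∑ b, J x y z a b c l) / (∑ x, ∑ y', ∑ a, ∑ b, J x y' z a b c l)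
        = ∑ x', ∑ z', ∑ a', ∑ b', ∑ c', ∑ l', J x' y z' a' b' c' l')
    -- free choice: P(z|x,y,a,b,λ) = P(z)
    (hFC_Z : ∀ z x y a b l,
      0 < (∑ z', ∑ c, J x y z' a b c l) →
      (∑ c, J x y z a b c l) / (∑ z', ∑ c, J x y z' a b c l)
        = ∑ x', ∑ y', ∑ a', ∑ b', ∑ c', ∑ l', J x' y' z a' b' c' l') :
    -- P(a,b|x,y,z,λ) = P(a,b|x,y,λ)
    (∀ a b x y z l,
      (∑ c, J x y z a b c l) / (∑ a', ∑ b', ∑ c', J x y z a' b' c' l)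
        = (∑ z', ∑ c, J x y z' a b c l) / (∑ z', ∑ a', ∑ b', ∑ c', J x y z' a' b' c' l)) ∧
    -- P(b,c|x,y,z,λ) = P(b,c|y,z,λ)
    (∀ b c x y z l,
      (∑ a, J x y z a b c l) / (∑ a', ∑ b', ∑ c', J x y z a' b' c' l)
        = (∑ x', ∑ a, J x' y z a b c l) / (∑ x', ∑ a', ∑ b', ∑ c', J x' y z a' b' c' l)) ∧
    -- P(a|x,y,z,λ) = P(a|x,λ)
    (∀ a x y z l,
      (∑ b, ∑ c, J x y z a b c l) / (∑ a', ∑ b', ∑ c', J x y z a' b' c' l)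
        = (∑ y', ∑ z', ∑ b, ∑ c, J x y' z' a b c l)
            / (∑ y', ∑ z', ∑ a', ∑ b', ∑ c', J x y' z' a' b' c' l)) ∧
    -- P(c|x,y,z,λ) = P(c|z,λ)
    (∀ c x y z l,
      (∑ a, ∑ b, J x y z a b c l) / (∑ a', ∑ b', ∑ c', J x y z a' b' c' l)
        = (∑ x', ∑ y', ∑ a, ∑ b, J x' y' z a b c l)
            / (∑ x', ∑ y', ∑ a', ∑ b', ∑ c', J x' y' z a' b' c' l)) := by
  refine ⟨?_, ?_, ?_, ?_⟩
  intro a b x y z l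
  have hQpos : 0 < ∑ x', ∑ y', ∑ a', ∑ b', ∑ c', ∑ l', J x' y' z a' b' c' l' := by
    refine sum_pos_elt (fun x' => sum_nn fun y' => sum_nn fun a' => sum_nn fun b' =>
      sum_nn fun c' => sum_nn fun l' => hnonneg _ _ _ _ _ _ _) x ?_
    refine sum_pos_elt (fun y' => sum_nn fun a' => sum_nn fun b' =>
      sum_nn fun c' => sum_nn fun l' => hnonneg _ _ _ _ _ _ _) y ?_
    rw [sc4 (fun a' b' c' l' => J x y z a' b' c' l')]
    exact sum_pos_elt (fun l' => sum_nn fun a' => sum_nn fun b' =>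
      sum_nn fun c' => hnonneg _ _ _ _ _ _ _) l (hpos x y z l)
  have hfact : ∀ a' b', (∑ c, J x y z a' b' c l)
      = (∑ x', ∑ y', ∑ a'', ∑ b'', ∑ c', ∑ l', J x' y' z a'' b'' c' l')
        * ∑ z', ∑ c, J x y z' a' b' c l :=
    fun a' b' => factor_aux (fun z' => ∑ c, J x y z' a' b' c l) _ z
      (fun z' => sum_nn fun c => hnonneg _ _ _ _ _ _ _) (hFC_Z z x y a' b' l)
  have hden : (∑ a', ∑ b', ∑ c', J x y z a' b' c' l)
      = (∑ x', ∑ y', ∑ a'', ∑ b'', ∑ c', ∑ l', J x' y' z a'' b'' c' l')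
        * ∑ z', ∑ a', ∑ b', ∑ c', J x y z' a' b' c' l := by
    simp_rw [hfact, ← Finset.mul_sum]
    congr 1
    exact sc3 (fun a' b' z' => ∑ c', J x y z' a' b' c' l)
  rw [hfact a b, hden, mul_div_mul_left _ _ hQpos.ne']
  intro b c x y z l
  have hPpos : 0 < ∑ y', ∑ z', ∑ a, ∑ b', ∑ c', ∑ l', J x y' z' a b' c' l' := by
    refine sum_pos_elt (fun y' => sum_nn fun z' => sum_nn fun a' => sum_nn fun b' =>
      sum_nn fun c' => sum_nn fun l' => hnonneg _ _ _ _ _ _ _) y ?_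
    refine sum_pos_elt (fun z' => sum_nn fun a' => sum_nn fun b' =>
      sum_nn fun c' => sum_nn fun l' => hnonneg _ _ _ _ _ _ _) z ?_
    rw [sc4 (fun a' b' c' l' => J x y z a' b' c' l')]
    exact sum_pos_elt (fun l' => sum_nn fun a' => sum_nn fun b' =>
      sum_nn fun c' => hnonneg _ _ _ _ _ _ _) l (hpos x y z l)
  have hfact : ∀ b' c', (∑ a, J x y z a b' c' l)
      = (∑ y', ∑ z', ∑ a, ∑ b'', ∑ c'', ∑ l', J x y' z' a b'' c'' l')
        * ∑ x', ∑ a, J x' y z a b' c' l :=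
    fun b' c' => factor_aux (fun x' => ∑ a, J x' y z a b' c' l) _ x
      (fun x' => sum_nn fun a' => hnonneg _ _ _ _ _ _ _) (hFC_X x y z b' c' l)
  have hden : (∑ a', ∑ b', ∑ c', J x y z a' b' c' l)
      = (∑ y', ∑ z', ∑ a, ∑ b'', ∑ c'', ∑ l', J x y' z' a b'' c'' l')
        * ∑ x', ∑ a', ∑ b', ∑ c', J x' y z a' b' c' l := by
    rw [(sc3 (fun b' c' a' => J x y z a' b' c' l)).symm]
    simp_rw [hfact, ← Finset.mul_sum]
    congr 1
    rw [sc3 (fun b' c' x' => ∑ a', J x' y z a' b' c' l)]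
    exact Finset.sum_congr rfl fun x' _ => sc3 _
  rw [hfact b c, hden, mul_div_mul_left _ _ hPpos.ne']
  intro a x y z l
  have hQpos : 0 < ∑ x', ∑ y', ∑ a', ∑ b', ∑ c', ∑ l', J x' y' z a' b' c' l' := by
    refine sum_pos_elt (fun x' => sum_nn fun y' => sum_nn fun a' => sum_nn fun b' =>
      sum_nn fun c' => sum_nn fun l' => hnonneg _ _ _ _ _ _ _) x ?_
    refine sum_pos_elt (fun y' => sum_nn fun a' => sum_nn fun b' =>
      sum_nn fun c' => sum_nn fun l' => hnonneg _ _ _ _ _ _ _) y ?_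
    rw [sc4 (fun a' b' c' l' => J x y z a' b' c' l')]
    exact sum_pos_elt (fun l' => sum_nn fun a' => sum_nn fun b' =>
      sum_nn fun c' => hnonneg _ _ _ _ _ _ _) l (hpos x y z l)
  have hPpos : 0 < ∑ x', ∑ z', ∑ a', ∑ b', ∑ c', ∑ l', J x' y z' a' b' c' l' := by
    refine sum_pos_elt (fun x' => sum_nn fun z' => sum_nn fun a' => sum_nn fun b' =>
      sum_nn fun c' => sum_nn fun l' => hnonneg _ _ _ _ _ _ _) x ?_
    refine sum_pos_elt (fun z' => sum_nn fun a' => sum_nn fun b' =>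
      sum_nn fun c' => sum_nn fun l' => hnonneg _ _ _ _ _ _ _) z ?_
    rw [sc4 (fun a' b' c' l' => J x y z a' b' c' l')]
    exact sum_pos_elt (fun l' => sum_nn fun a' => sum_nn fun b' =>
      sum_nn fun c' => hnonneg _ _ _ _ _ _ _) l (hpos x y z l)
  have h1 : ∀ a' b', (∑ c, J x y z a' b' c l)
      = (∑ x', ∑ y', ∑ a'', ∑ b'', ∑ c', ∑ l', J x' y' z a'' b'' c' l')
        * ∑ z', ∑ c, J x y z' a' b' c l :=
    fun a' b' => factor_aux (fun z' => ∑ c, J x y z' a' b' c l) _ z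
      (fun z' => sum_nn fun c => hnonneg _ _ _ _ _ _ _) (hFC_Z z x y a' b' l)
  have h2 : ∀ a', (∑ z', ∑ b, ∑ c, J x y z' a' b c l)
      = (∑ x', ∑ z', ∑ a'', ∑ b, ∑ c, ∑ l', J x' y z' a'' b c l')
        * ∑ y', ∑ z', ∑ b, ∑ c, J x y' z' a' b c l :=
    fun a' => factor_aux (fun y' => ∑ z', ∑ b, ∑ c, J x y' z' a' b c l) _ y
      (fun y' => sum_nn fun z' => sum_nn fun b => sum_nn fun c => hnonneg _ _ _ _ _ _ _)
      (hFC_Y1 y x a' l)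
  have hnum : ∀ a', (∑ b, ∑ c, J x y z a' b c l)
      = (∑ x', ∑ y', ∑ a'', ∑ b'', ∑ c', ∑ l', J x' y' z a'' b'' c' l')
        * ((∑ x', ∑ z', ∑ a'', ∑ b, ∑ c, ∑ l', J x' y z' a'' b c l')
            * ∑ y', ∑ z', ∑ b, ∑ c, J x y' z' a' b c l) := by
    intro a'
    calc ∑ b, ∑ c, J x y z a' b c l
        = ∑ b, (∑ x', ∑ y', ∑ a'', ∑ b'', ∑ c', ∑ l', J x' y' z a'' b'' c' l')
            * ∑ z', ∑ c, J x y z' a' b c l := Finset.sum_congr rfl fun b _ => h1 a' b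
      _ = (∑ x', ∑ y', ∑ a'', ∑ b'', ∑ c', ∑ l', J x' y' z a'' b'' c' l')
            * ∑ b, ∑ z', ∑ c, J x y z' a' b c l := by rw [← Finset.mul_sum]
      _ = (∑ x', ∑ y', ∑ a'', ∑ b'', ∑ c', ∑ l', J x' y' z a'' b'' c' l')
            * ∑ z', ∑ b, ∑ c, J x y z' a' b c l := by
          congr 1; exact Finset.sum_comm
      _ = _ := by rw [h2 a']
  have hden : (∑ a', ∑ b', ∑ c', J x y z a' b' c' l)
      = (∑ x', ∑ y', ∑ a'', ∑ b'', ∑ c', ∑ l', J x' y' z a'' b'' c' l')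
        * ((∑ x', ∑ z', ∑ a'', ∑ b, ∑ c, ∑ l', J x' y z' a'' b c l')
            * ∑ y', ∑ z', ∑ a', ∑ b', ∑ c', J x y' z' a' b' c' l) := by
    calc ∑ a', ∑ b', ∑ c', J x y z a' b' c' l
        = ∑ a', (∑ x', ∑ y', ∑ a'', ∑ b'', ∑ c', ∑ l', J x' y' z a'' b'' c' l')
            * ((∑ x', ∑ z', ∑ a'', ∑ b, ∑ c, ∑ l', J x' y z' a'' b c l')
                * ∑ y', ∑ z', ∑ b', ∑ c', J x y' z' a' b' c' l) :=
          Finset.sum_congr rfl fun a' _ => hnum a'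
      _ = (∑ x', ∑ y', ∑ a'', ∑ b'', ∑ c', ∑ l', J x' y' z a'' b'' c' l')
            * ((∑ x', ∑ z', ∑ a'', ∑ b, ∑ c, ∑ l', J x' y z' a'' b c l')
                * ∑ a', ∑ y', ∑ z', ∑ b', ∑ c', J x y' z' a' b' c' l) := by
          simp_rw [← Finset.mul_sum]
      _ = _ := by
          congr 2
          exact (sc3 fun y' z' a' => ∑ b', ∑ c', J x y' z' a' b' c' l).symm
  rw [hnum a, hden, mul_div_mul_left _ _ hQpos.ne', mul_div_mul_left _ _ hPpos.ne']
  intro c x y z l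
  have hPxpos : 0 < ∑ y', ∑ z', ∑ a, ∑ b', ∑ c', ∑ l', J x y' z' a b' c' l' := by
    refine sum_pos_elt (fun y' => sum_nn fun z' => sum_nn fun a' => sum_nn fun b' =>
      sum_nn fun c' => sum_nn fun l' => hnonneg _ _ _ _ _ _ _) y ?_
    refine sum_pos_elt (fun z' => sum_nn fun a' => sum_nn fun b' =>
      sum_nn fun c' => sum_nn fun l' => hnonneg _ _ _ _ _ _ _) z ?_
    rw [sc4 (fun a' b' c' l' => J x y z a' b' c' l')]
    exact sum_pos_elt (fun l' => sum_nn fun a' => sum_nn fun b' =>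
      sum_nn fun c' => hnonneg _ _ _ _ _ _ _) l (hpos x y z l)
  have hPypos : 0 < ∑ x', ∑ z', ∑ a', ∑ b', ∑ c', ∑ l', J x' y z' a' b' c' l' := by
    refine sum_pos_elt (fun x' => sum_nn fun z' => sum_nn fun a' => sum_nn fun b' =>
      sum_nn fun c' => sum_nn fun l' => hnonneg _ _ _ _ _ _ _) x ?_
    refine sum_pos_elt (fun z' => sum_nn fun a' => sum_nn fun b' =>
      sum_nn fun c' => sum_nn fun l' => hnonneg _ _ _ _ _ _ _) z ?_
    rw [sc4 (fun a' b' c' l' => J x y z a' b' c' l')]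
    exact sum_pos_elt (fun l' => sum_nn fun a' => sum_nn fun b' =>
      sum_nn fun c' => hnonneg _ _ _ _ _ _ _) l (hpos x y z l)
  have h1 : ∀ b' c', (∑ a, J x y z a b' c' l)
      = (∑ y', ∑ z', ∑ a, ∑ b'', ∑ c'', ∑ l', J x y' z' a b'' c'' l')
        * ∑ x', ∑ a, J x' y z a b' c' l :=
    fun b' c' => factor_aux (fun x' => ∑ a, J x' y z a b' c' l) _ x
      (fun x' => sum_nn fun a' => hnonneg _ _ _ _ _ _ _) (hFC_X x y z b' c' l)
  have hsw : ∀ c', (∑ y', ∑ x', ∑ a, ∑ b, J x' y' z a b c' l)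
      = ∑ x', ∑ y', ∑ a, ∑ b, J x' y' z a b c' l := fun c' => Finset.sum_comm
  have h2 : ∀ c', (∑ x', ∑ a, ∑ b, J x' y z a b c' l)
      = (∑ x', ∑ z', ∑ a', ∑ b', ∑ c'', ∑ l', J x' y z' a' b' c'' l')
        * ∑ y', ∑ x', ∑ a, ∑ b, J x' y' z a b c' l := by
    intro c'
    refine factor_aux (fun y' => ∑ x', ∑ a, ∑ b, J x' y' z a b c' l) _ y
      (fun y' => sum_nn fun x' => sum_nn fun a' => sum_nn fun b' => hnonneg _ _ _ _ _ _ _) ?_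
    intro hp
    rw [hsw c']
    exact hFC_Y2 y z c' l (by rwa [hsw c'] at hp)
  have hnum : ∀ c', (∑ a, ∑ b, J x y z a b c' l)
      = (∑ y', ∑ z', ∑ a, ∑ b'', ∑ c'', ∑ l', J x y' z' a b'' c'' l')
        * ((∑ x', ∑ z', ∑ a', ∑ b', ∑ c'', ∑ l', J x' y z' a' b' c'' l')
            * ∑ y', ∑ x', ∑ a, ∑ b, J x' y' z a b c' l) := by
    intro c'
    calc ∑ a, ∑ b, J x y z a b c' l
        = ∑ b, ∑ a, J x y z a b c' l := Finset.sum_comm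
      _ = ∑ b, (∑ y', ∑ z', ∑ a, ∑ b'', ∑ c'', ∑ l', J x y' z' a b'' c'' l')
            * ∑ x', ∑ a, J x' y z a b c' l := Finset.sum_congr rfl fun b _ => h1 b c'
      _ = (∑ y', ∑ z', ∑ a, ∑ b'', ∑ c'', ∑ l', J x y' z' a b'' c'' l')
            * ∑ b, ∑ x', ∑ a, J x' y z a b c' l := by rw [← Finset.mul_sum]
      _ = (∑ y', ∑ z', ∑ a, ∑ b'', ∑ c'', ∑ l', J x y' z' a b'' c'' l')
            * ∑ x', ∑ a, ∑ b, J x' y z a b c' l := by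
          congr 1
          rw [show (∑ b, ∑ x', ∑ a, J x' y z a b c' l)
              = ∑ x', ∑ b, ∑ a, J x' y z a b c' l from Finset.sum_comm]
          exact Finset.sum_congr rfl fun x' _ => Finset.sum_comm
      _ = _ := by rw [h2 c']
  have hden : (∑ a', ∑ b', ∑ c', J x y z a' b' c' l)
      = (∑ y', ∑ z', ∑ a, ∑ b'', ∑ c'', ∑ l', J x y' z' a b'' c'' l')
        * ((∑ x', ∑ z', ∑ a', ∑ b', ∑ c'', ∑ l', J x' y z' a' b' c'' l')
            * ∑ c', ∑ y', ∑ x', ∑ a', ∑ b', J x' y' z a' b' c' l) := by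
    calc ∑ a', ∑ b', ∑ c', J x y z a' b' c' l
        = ∑ c', ∑ a', ∑ b', J x y z a' b' c' l := sc3 _
      _ = ∑ c', (∑ y', ∑ z', ∑ a, ∑ b'', ∑ c'', ∑ l', J x y' z' a b'' c'' l')
            * ((∑ x', ∑ z', ∑ a', ∑ b', ∑ c'', ∑ l', J x' y z' a' b' c'' l')
                * ∑ y', ∑ x', ∑ a', ∑ b', J x' y' z a' b' c' l) :=
          Finset.sum_congr rfl fun c' _ => hnum c'
      _ = _ := by simp_rw [← Finset.mul_sum]
  have eR2 : (∑ x', ∑ y', ∑ a', ∑ b', ∑ c', J x' y' z a' b' c' l)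
      = ∑ c', ∑ y', ∑ x', ∑ a', ∑ b', J x' y' z a' b' c' l := by
    calc ∑ x', ∑ y', ∑ a', ∑ b', ∑ c', J x' y' z a' b' c' l
        = ∑ x', ∑ y', ∑ c', ∑ a', ∑ b', J x' y' z a' b' c' l :=
          Finset.sum_congr rfl fun x' _ => Finset.sum_congr rfl fun y' _ => sc3 _
      _ = ∑ c', ∑ x', ∑ y', ∑ a', ∑ b', J x' y' z a' b' c' l :=
          sc3 (fun x' y' c' => ∑ a', ∑ b', J x' y' z a' b' c' l)
      _ = _ := Finset.sum_congr rfl fun c' _ => Finset.sum_comm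
  rw [hnum c, hden, mul_div_mul_left _ _ hPxpos.ne', mul_div_mul_left _ _ hPypos.ne', eR2,
    show (∑ x', ∑ y', ∑ a, ∑ b, J x' y' z a b c l)
      = ∑ y', ∑ x', ∑ a, ∑ b, J x' y' z a b c l from Finset.sum_comm]
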